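/- arXiv:2405.02439 — 6 statements merged into one kernel-verified Lean document; each statement's English description precedes it below -/
import Mathlib

section
/- Replacing repeated visits to the same location by a single visit at the last repeated period preserves the total reward, for a single-facility schedule with loyal customers and spread factor 1. -/
/-- `capB Jset sched j s` : whether customer `j` is captured at period `s` under the
single-facility schedule `sched` (the open location, if any, captures `j`). -/
def capB {I C : Type*} [DecidableEq C] (Jset : I → Finset C)
    (sched : ℕ → Option I) (j : C) (s : ℕ) : Bool :=
  match sched s with
  | none => false
  | some i => decide (j ∈ Jset i)

/-- Previous-capture time `τ(j,t)`: the largest period `t' < t` (with `t' ≥ 1`) at which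
customer `j` was captured, or `0` if none. -/
def prevCap {I C : Type*} [DecidableEq C] (Jset : I → Finset C)
    (sched : ℕ → Option I) (j : C) (t : ℕ) : ℕ :=
  ((Finset.Ico 1 t).filter (fun s => capB Jset sched j s = true)).sup id

/-- Total reward of a single-facility schedule with spread factor 1: at each period `t`
with an open location `i`, each captured customer `j ∈ J(i)` contributes
`r_i · ∑_{s = τ(j,t)+1}^{t} d^s_j`. -/
def reward {I C : Type*} [DecidableEq C] (T : ℕ) (Jset : I → Finset C)
    (r : I → ℝ) (d : ℕ → C → ℝ) (sched : ℕ → Option I) : ℝ :=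
  ∑ t ∈ Finset.Icc 1 T, ((sched t).elim 0 (fun i =>
    r i * ∑ j ∈ Jset i, ∑ s ∈ Finset.Icc (prevCap Jset sched j t + 1) t, d s j))

/-!
With loyal customers, the customers of `i'` are captured exactly at the visits of `i'`, and no
other customer's captures change when visits of `i'` are dropped; so every period outside `T'`
earns the same. On `T'`, the intervals `(τ(j,t), t]`, `t ∈ T'`, tile `(0, max T']`, so the
visits of `i'` collect the demand of each of its customers on `(0, max T']` exactly once, which
is also what the single visit at `max T'` collects.
-/

open Finset Function

/-- `τ(j, t)` for a customer captured exactly at the periods in `S` (`0` if none precedes `t`). -/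
def lastBefore (S : Finset ℕ) (t : ℕ) : ℕ :=
  ((Ico 1 t).filter (· ∈ S)).sup id

lemma lastBefore_insert_of_le {S : Finset ℕ} {a t : ℕ} (hta : t ≤ a) :
    lastBefore (insert a S) t = lastBefore S t := by
  unfold lastBefore
  congr 1
  refine filter_congr fun s hs => ?_
  have : s < a := (mem_Ico.1 hs).2.trans_le hta
  simp [this.ne]

lemma lastBefore_insert_self {S : Finset ℕ} {a : ℕ} (hS : ∀ x ∈ S, x < a) :
    lastBefore (insert a S) a = S.sup id := by
  refine le_antisymm (Finset.sup_mono fun s hs => ?_) (Finset.sup_le fun s hs => ?_)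
  · obtain ⟨hs, hsS⟩ := mem_filter.1 hs
    exact (mem_insert.1 hsS).resolve_left (mem_Ico.1 hs).2.ne
  · rcases Nat.eq_zero_or_pos s with rfl | hpos
    · exact Nat.zero_le _
    · exact le_sup (f := id) (mem_filter.2 ⟨mem_Ico.2 ⟨hpos, hS s hs⟩, mem_insert_of_mem hs⟩)

lemma sum_sum_Ioc_lastBefore {M : Type*} [AddCommMonoid M] (S : Finset ℕ) (f : ℕ → M) :
    ∑ t ∈ S, ∑ s ∈ Ioc (lastBefore S t) t, f s = ∑ s ∈ Ioc 0 (S.sup id), f s := by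
  induction S using Finset.induction_on_max with
  | empty => simp
  | insert a S hS ih =>
    have haS : a ∉ S := fun h => (hS a h).false
    have hsup : S.sup id ≤ a := Finset.sup_le fun x hx => (hS x hx).le
    have hrest : ∑ t ∈ S, ∑ s ∈ Ioc (lastBefore (insert a S) t) t, f s =
        ∑ t ∈ S, ∑ s ∈ Ioc (lastBefore S t) t, f s :=
      sum_congr rfl fun t ht => by rw [lastBefore_insert_of_le (hS t ht).le]
    rw [sum_insert haS, lastBefore_insert_self hS, hrest, ih, add_comm,
      sum_Ioc_consecutive _ (Nat.zero_le _) hsup, sup_insert, id, max_eq_left hsup]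

section Schedule

variable {I C : Type*} [DecidableEq C] (Jset : I → Finset C) (r : I → ℝ) (d : ℕ → C → ℝ)

def periodReward (sched : ℕ → Option I) (t : ℕ) : ℝ :=
  (sched t).elim 0 fun i =>
    r i * ∑ j ∈ Jset i, ∑ s ∈ Icc (prevCap Jset sched j t + 1) t, d s j

lemma reward_eq_sum_periodReward (T : ℕ) (sched : ℕ → Option I) :
    reward T Jset r d sched = ∑ t ∈ Icc 1 T, periodReward Jset r d sched t :=
  rfl

variable {Jset}

lemma prevCap_eq_lastBefore {sched : ℕ → Option I} {j : C} {S : Finset ℕ}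
    (h : ∀ s, capB Jset sched j s = true ↔ s ∈ S) (t : ℕ) :
    prevCap Jset sched j t = lastBefore S t := by
  unfold prevCap lastBefore
  exact congrArg _ (filter_congr fun s _ => h s)

lemma prevCap_congr {σ σ' : ℕ → Option I} {j : C}
    (h : ∀ s, capB Jset σ' j s = capB Jset σ j s) (t : ℕ) :
    prevCap Jset σ' j t = prevCap Jset σ j t := by
  unfold prevCap
  exact congrArg _ (filter_congr fun s _ => by rw [h])

lemma capB_eq_true_iff_of_mem (hdisj : Pairwise (Disjoint on Jset)) {sched : ℕ → Option I}
    {i : I} {j : C} (hj : j ∈ Jset i) (s : ℕ) :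
    capB Jset sched j s = true ↔ sched s = some i := by
  cases h : sched s with
  | none => simp [capB, h]
  | some k =>
    simp only [capB, h, decide_eq_true_eq, Option.some.injEq]
    refine ⟨fun hk => by_contra fun hki => disjoint_left.1 (hdisj hki) hk hj, ?_⟩
    rintro rfl
    exact hj

lemma capB_ite_none {sched : ℕ → Option I} {p : ℕ → Prop} [DecidablePred p] {i : I} {j : C}
    (hp : ∀ s, p s → sched s = some i) (hj : j ∉ Jset i) (s : ℕ) :
    capB Jset (fun t => if p t then none else sched t) j s = capB Jset sched j s := by
  by_cases h : p s
  · simp [capB, h, hp s h, hj]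
  · simp [capB, h]

lemma periodReward_congr {σ σ' : ℕ → Option I} {t : ℕ} (ht : σ' t = σ t)
    (hcap : ∀ i, σ t = some i → ∀ j ∈ Jset i, ∀ s, capB Jset σ' j s = capB Jset σ j s) :
    periodReward Jset r d σ' t = periodReward Jset r d σ t := by
  unfold periodReward
  rw [ht]
  cases h : σ t with
  | none => rfl
  | some i =>
    simp only [Option.elim_some]
    exact congrArg _ (sum_congr rfl fun j hj => by rw [prevCap_congr (hcap i h j hj)])

lemma periodReward_of_eq_none {sched : ℕ → Option I} {t : ℕ} (ht : sched t = none) :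
    periodReward Jset r d sched t = 0 := by
  simp [periodReward, ht]

lemma sum_periodReward_of_capB_iff {sched : ℕ → Option I} {i : I} {S : Finset ℕ}
    (hS : ∀ t ∈ S, sched t = some i)
    (hcap : ∀ j ∈ Jset i, ∀ s, capB Jset sched j s = true ↔ s ∈ S) :
    ∑ t ∈ S, periodReward Jset r d sched t = r i * ∑ j ∈ Jset i, ∑ s ∈ Ioc 0 (S.sup id), d s j :=
  calc ∑ t ∈ S, periodReward Jset r d sched t
      = ∑ t ∈ S, r i * ∑ j ∈ Jset i, ∑ s ∈ Ioc (lastBefore S t) t, d s j :=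
        sum_congr rfl fun t ht => by
          simp only [periodReward, hS t ht, Option.elim_some, Icc_add_one_left_eq_Ioc]
          exact congrArg _ (sum_congr rfl fun j hj => by
            rw [prevCap_eq_lastBefore (hcap j hj)])
    _ = r i * ∑ j ∈ Jset i, ∑ s ∈ Ioc 0 (S.sup id), d s j := by
        rw [← mul_sum, sum_comm]
        simp_rw [sum_sum_Ioc_lastBefore]

end Schedule

theorem stmt_3_general {I C : Type*} [DecidableEq C]
    (T : ℕ) (Jset : I → Finset C)
    (hdisj : ∀ i k : I, i ≠ k → Disjoint (Jset i) (Jset k))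
    (r : I → ℝ) (d : ℕ → C → ℝ)
    (sched : ℕ → Option I) (i' : I) (T' : Finset ℕ)
    (hT'sub : T' ⊆ Finset.Icc 1 T)
    (hT' : ∀ t, t ∈ T' ↔ sched t = some i') (hne : T'.Nonempty) :
    reward T Jset r d (fun t => if t ∈ T' ∧ t ≠ T'.max' hne then none else sched t)
      = reward T Jset r d sched := by
  set M := T'.max' hne
  set σ' : ℕ → Option I := fun t => if t ∈ T' ∧ t ≠ M then none else sched t
  have hM : M ∈ T' := max'_mem T' hne
  have hvisit : ∀ s, s ∈ T' ∧ s ≠ M → sched s = some i' := fun s hs => (hT' s).1 hs.1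
  have hcap : ∀ j ∈ Jset i', ∀ s, capB Jset sched j s = true ↔ s ∈ T' := fun j hj s =>
    (capB_eq_true_iff_of_mem hdisj hj s).trans (hT' s).symm
  have hcap' : ∀ j ∈ Jset i', ∀ s, capB Jset σ' j s = true ↔ s ∈ ({M} : Finset ℕ) := by
    intro j hj s
    rw [capB_eq_true_iff_of_mem hdisj hj, mem_singleton]
    by_cases hs : s ∈ T' ∧ s ≠ M
    · simp [σ', hs]
    · simp only [σ', if_neg hs, ← hT']
      exact ⟨fun h => not_not.1 fun h' => hs ⟨h, h'⟩, fun h => h ▸ hM⟩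
  have hoff : ∀ t ∉ T', periodReward Jset r d σ' t = periodReward Jset r d sched t :=
    fun t ht => periodReward_congr r d (by simp [σ', ht]) fun i hi j hj =>
      capB_ite_none hvisit fun hj' =>
        disjoint_left.1 (hdisj i i' fun h => ht ((hT' t).2 (h ▸ hi))) hj hj'
  have hon : ∑ t ∈ T', periodReward Jset r d σ' t = ∑ t ∈ T', periodReward Jset r d sched t := by
    rw [← sum_subset (singleton_subset_iff.2 hM) fun t ht htM =>
        periodReward_of_eq_none r d (by simp [σ', ht, mem_singleton.not.1 htM]),
      sum_periodReward_of_capB_iff r d (by simp [σ', (hT' M).1 hM]) hcap',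
      sum_periodReward_of_capB_iff r d (fun t ht => (hT' t).1 ht) hcap,
      sup_singleton, ← sup'_eq_sup hne, ← max'_eq_sup']
    rfl
  rw [reward_eq_sum_periodReward, reward_eq_sum_periodReward, ← sum_sdiff hT'sub,
    ← sum_sdiff hT'sub, hon, sum_congr rfl fun t ht => hoff t (mem_sdiff.1 ht).2]

/-- With loyal customers (pairwise disjoint capture sets) and spread factor 1, replacing
the repeated visits of a location `i'` (scheduled at the set of periods `T'`, `|T'| ≥ 2`)
by a single visit at the last of those periods preserves the total reward. -/
theorem stmt_3 {I C : Type*} [DecidableEq I] [DecidableEq C]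
    (T : ℕ) (Jset : I → Finset C)
    (hdisj : ∀ i k : I, i ≠ k → Disjoint (Jset i) (Jset k))
    (r : I → ℝ) (d : ℕ → C → ℝ) (hd : ∀ s j, 0 ≤ d s j)
    (sched : ℕ → Option I) (i' : I) (T' : Finset ℕ)
    (hT'sub : T' ⊆ Finset.Icc 1 T) (hT'card : 2 ≤ T'.card)
    (hT' : ∀ t, t ∈ T' ↔ sched t = some i') (hne : T'.Nonempty) :
    reward T Jset r d (fun t => if t ∈ T' ∧ t ≠ T'.max' hne then none else sched t)
      = reward T Jset r d sched :=
  stmt_3_general T Jset hdisj r d sched i' T' hT'sub hT' hne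
end

section
/- The 1-DFLP-CCD with loyal customers reduces to a maximum-weight assignment problem: the optimal total reward equals the maximum over injective assignments σ of distinct locations to time periods of ∑_t ρ(σ(t), t), where ρ(i,t) = r_i ∑_{j ∈ J(i)} ∑_{s ≤ t} d^s_j. -/
/-!
Because the capture sets are pairwise disjoint, a customer `j ∈ J(i)` is captured exactly at the
visits of location `i`, so the rewards collected at the successive visits of `i` telescope to
`ρ(i, tᵢ)`, where `tᵢ` is the last visit of `i`. Keeping only the last visit of each location
therefore turns a schedule into an injective assignment of the same value. Conversely, under an
injective assignment every visit is the first one, so nothing has been captured before and the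
reward of period `t` is exactly `ρ(σ(t), t)`.
-/

theorem Finset.sum_sum_Icc_sup_filter_lt {M : Type*} [AddCommMonoid M] (g : ℕ → M)
    (S : Finset ℕ) :
    ∑ t ∈ S, ∑ s ∈ Finset.Icc ((S.filter (· < t)).sup id + 1) t, g s
      = ∑ s ∈ Finset.Icc 1 (S.sup id), g s := by
  refine Finset.induction_on_max S (by simp) fun a S hlt ih => ?_
  have ha : a ∉ S := fun h => lt_irrefl a (hlt a h)
  have hfilter_a : (insert a S).filter (· < a) = S := by
    rw [Finset.filter_insert, if_neg (lt_irrefl a), Finset.filter_true_of_mem hlt]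
  have hrest : ∑ t ∈ S, ∑ s ∈ Finset.Icc (((insert a S).filter (· < t)).sup id + 1) t, g s
      = ∑ t ∈ S, ∑ s ∈ Finset.Icc ((S.filter (· < t)).sup id + 1) t, g s :=
    Finset.sum_congr rfl fun t ht => by rw [Finset.filter_insert, if_neg (hlt t ht).not_gt]
  have hsup : S.sup id ≤ a := Finset.sup_le fun s hs => (hlt s hs).le
  rw [Finset.sum_insert ha, hrest, ih, hfilter_a, Finset.sup_insert, id, sup_of_le_left hsup,
    add_comm]
  have hIcc_one : ∀ n, Finset.Icc 1 n = Finset.Ioc 0 n := Finset.Icc_add_one_left_eq_Ioc 0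
  rw [hIcc_one, hIcc_one, Finset.Icc_add_one_left_eq_Ioc]
  exact Finset.sum_Ioc_consecutive g (Nat.zero_le _) hsup

theorem Finset.sum_option_elim_eq_sum_fiberwise {ι I M : Type*} [Fintype I] [DecidableEq I]
    [AddCommMonoid M] (P : Finset ι) (f : ι → Option I) (g : I → ι → M) :
    ∑ t ∈ P, (f t).elim 0 (g · t) = ∑ i, ∑ t ∈ P.filter (f · = some i), g i t := by
  rw [← Finset.sum_fiberwise P f, Fintype.sum_option]
  have hnone : ∑ t ∈ P.filter (f · = none), (f t).elim 0 (g · t) = 0 :=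
    Finset.sum_eq_zero fun t ht => by rw [(Finset.mem_filter.mp ht).2, Option.elim_none]
  rw [hnone, zero_add]
  refine Finset.sum_congr rfl fun i _ => Finset.sum_congr rfl fun t ht => ?_
  rw [(Finset.mem_filter.mp ht).2, Option.elim_some]

section Schedules

variable {I C : Type*}

def captureReward (Jset : I → Finset C) (r : I → ℝ) (d : ℕ → C → ℝ) (i : I) (t : ℕ) : ℝ :=
  r i * ∑ j ∈ Jset i, ∑ s ∈ Finset.Icc 1 t, d s j

theorem captureReward_zero (Jset : I → Finset C) (r : I → ℝ) (d : ℕ → C → ℝ) (i : I) :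
    captureReward Jset r d i 0 = 0 := by
  simp [captureReward]

section Visits

variable [DecidableEq I]

def visits (T : ℕ) (sched : ℕ → Option I) (i : I) : Finset ℕ :=
  (Finset.Icc 1 T).filter (sched · = some i)

def lastVisit (T : ℕ) (sched : ℕ → Option I) (i : I) : ℕ :=
  (visits T sched i).sup id

def lastVisitAssignment (T : ℕ) (sched : ℕ → Option I) (t : ℕ) : Option I :=
  (sched t).filter (lastVisit T sched · = t)

theorem filter_lt_visits {T : ℕ} {sched : ℕ → Option I} {i : I} {t : ℕ}
    (ht : t ∈ visits T sched i) :
    (visits T sched i).filter (· < t) = (Finset.Ico 1 t).filter (sched · = some i) := by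
  simp only [visits, Finset.mem_filter, Finset.mem_Icc] at ht
  ext s
  simp only [visits, Finset.mem_filter, Finset.mem_Icc, Finset.mem_Ico]
  exact ⟨fun ⟨⟨⟨h1, _⟩, hs⟩, hlt⟩ => ⟨⟨h1, hlt⟩, hs⟩,
    fun ⟨⟨h1, hlt⟩, hs⟩ => ⟨⟨⟨h1, by omega⟩, hs⟩, hlt⟩⟩

theorem lastVisit_le (T : ℕ) (sched : ℕ → Option I) (i : I) : lastVisit T sched i ≤ T :=
  Finset.sup_le fun _ ht => (Finset.mem_Icc.mp (Finset.mem_filter.mp ht).1).2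

theorem lastVisitAssignment_eq_some_iff {T : ℕ} {sched : ℕ → Option I} {t : ℕ} (ht : 1 ≤ t)
    {i : I} : lastVisitAssignment T sched t = some i ↔ lastVisit T sched i = t := by
  rw [lastVisitAssignment, Option.filter_eq_some_iff, decide_eq_true_iff]
  refine ⟨And.right, fun hlast => ⟨?_, hlast⟩⟩
  have hne : (visits T sched i).Nonempty := by
    by_contra hempty
    rw [Finset.not_nonempty_iff_eq_empty] at hempty
    rw [lastVisit, hempty, Finset.sup_empty, Nat.bot_eq_zero] at hlast
    omega
  obtain ⟨t', ht', hsup⟩ := Finset.exists_mem_eq_sup _ hne id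
  rw [← hlast, lastVisit, hsup]
  exact (Finset.mem_filter.mp ht').2

theorem lastVisitAssignment_injOn (T : ℕ) (sched : ℕ → Option I) :
    ∀ t ∈ Finset.Icc 1 T, ∀ t' ∈ Finset.Icc 1 T, ∀ i : I,
      lastVisitAssignment T sched t = some i → lastVisitAssignment T sched t' = some i →
      t = t' := by
  intro t ht t' ht' i h h'
  rw [lastVisitAssignment_eq_some_iff (Finset.mem_Icc.mp ht).1] at h
  rw [lastVisitAssignment_eq_some_iff (Finset.mem_Icc.mp ht').1] at h'
  rw [← h, ← h']

theorem sum_lastVisitAssignment [Fintype I] (T : ℕ) (Jset : I → Finset C) (r : I → ℝ)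
    (d : ℕ → C → ℝ) (sched : ℕ → Option I) :
    ∑ t ∈ Finset.Icc 1 T, (lastVisitAssignment T sched t).elim 0 (captureReward Jset r d · t)
      = ∑ i, captureReward Jset r d i (lastVisit T sched i) := by
  rw [Finset.sum_option_elim_eq_sum_fiberwise]
  refine Finset.sum_congr rfl fun i _ => ?_
  have hfilter : (Finset.Icc 1 T).filter (lastVisitAssignment T sched · = some i)
      = (Finset.Icc 1 T).filter (· = lastVisit T sched i) :=
    Finset.filter_congr fun t ht => by
      rw [lastVisitAssignment_eq_some_iff (Finset.mem_Icc.mp ht).1, eq_comm]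
  rw [hfilter, Finset.sum_filter, Finset.sum_ite_eq']
  split_ifs with hmem
  · rfl
  · have hzero : lastVisit T sched i = 0 := by
      have := lastVisit_le T sched i
      simp only [Finset.mem_Icc, not_and_or, not_le] at hmem
      omega
    rw [hzero, captureReward_zero]

end Visits

variable [DecidableEq C] {Jset : I → Finset C}

theorem capB_eq_true_iff (hdisj : ∀ i k : I, i ≠ k → Disjoint (Jset i) (Jset k))
    {sched : ℕ → Option I} {i : I} {j : C} (hj : j ∈ Jset i) (s : ℕ) :
    capB Jset sched j s = true ↔ sched s = some i := by
  unfold capB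
  rcases sched s with _ | k
  · simp
  · simp only [decide_eq_true_eq, Option.some.injEq]
    exact ⟨fun hk => by_contra fun hki => Finset.disjoint_left.mp (hdisj k i hki) hk hj,
      fun hki => hki ▸ hj⟩

variable [DecidableEq I]

theorem prevCap_eq_sup_filter (hdisj : ∀ i k : I, i ≠ k → Disjoint (Jset i) (Jset k))
    (sched : ℕ → Option I) {i : I} {j : C} (hj : j ∈ Jset i) (t : ℕ) :
    prevCap Jset sched j t = ((Finset.Ico 1 t).filter (sched · = some i)).sup id := by
  unfold prevCap
  simp only [capB_eq_true_iff hdisj hj]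

theorem reward_eq_sum_captureReward_lastVisit [Fintype I]
    (hdisj : ∀ i k : I, i ≠ k → Disjoint (Jset i) (Jset k)) (T : ℕ) (r : I → ℝ)
    (d : ℕ → C → ℝ) (sched : ℕ → Option I) :
    reward T Jset r d sched = ∑ i, captureReward Jset r d i (lastVisit T sched i) := by
  unfold reward
  rw [Finset.sum_option_elim_eq_sum_fiberwise]
  refine Finset.sum_congr rfl fun i _ => ?_
  change ∑ t ∈ visits T sched i, _ = _
  rw [captureReward, ← Finset.mul_sum, Finset.sum_comm]
  congr 1
  refine Finset.sum_congr rfl fun j hj => ?_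
  rw [lastVisit, ← Finset.sum_sum_Icc_sup_filter_lt]
  refine Finset.sum_congr rfl fun t ht => ?_
  rw [prevCap_eq_sup_filter hdisj sched hj, ← filter_lt_visits ht]

theorem reward_eq_sum_captureReward_of_injOn
    (hdisj : ∀ i k : I, i ≠ k → Disjoint (Jset i) (Jset k)) (T : ℕ) (r : I → ℝ)
    (d : ℕ → C → ℝ) {σ : ℕ → Option I}
    (hσ : ∀ t ∈ Finset.Icc 1 T, ∀ t' ∈ Finset.Icc 1 T, ∀ i : I,
      σ t = some i → σ t' = some i → t = t') :
    reward T Jset r d σ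
      = ∑ t ∈ Finset.Icc 1 T, (σ t).elim 0 (captureReward Jset r d · t) := by
  refine Finset.sum_congr rfl fun t ht => ?_
  rcases hσt : σ t with _ | i
  · rfl
  refine congrArg (r i * ·) (Finset.sum_congr rfl fun j hj => ?_)
  have hno_earlier : (Finset.Ico 1 t).filter (σ · = some i) = ∅ :=
    Finset.filter_eq_empty_iff.mpr fun s hs hσs => by
      have hs := Finset.mem_Ico.mp hs
      have hT := Finset.mem_Icc.mp ht
      have := hσ s (Finset.mem_Icc.mpr ⟨hs.1, by omega⟩) t ht i hσs hσt
      omega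
  rw [prevCap_eq_sup_filter hdisj σ hj, hno_earlier, Finset.sup_empty]
  rfl

end Schedules

theorem stmt_5_general {I C : Type*} [Fintype I] [DecidableEq C] (T : ℕ)
    (Jset : I → Finset C)
    (hdisj : ∀ i k : I, i ≠ k → Disjoint (Jset i) (Jset k))
    (r : I → ℝ) (d : ℕ → C → ℝ) :
    sSup {x : ℝ | ∃ sched : ℕ → Option I, x = reward T Jset r d sched} =
    sSup {x : ℝ | ∃ σ : ℕ → Option I,
      (∀ t ∈ Finset.Icc 1 T, ∀ t' ∈ Finset.Icc 1 T, ∀ i : I,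
        σ t = some i → σ t' = some i → t = t') ∧
      x = ∑ t ∈ Finset.Icc 1 T, ((σ t).elim 0 (fun i =>
        r i * ∑ j ∈ Jset i, ∑ s ∈ Finset.Icc 1 t, d s j))} := by
  classical
  congr 1
  ext x
  constructor
  · rintro ⟨sched, rfl⟩
    refine ⟨lastVisitAssignment T sched, lastVisitAssignment_injOn T sched, ?_⟩
    rw [reward_eq_sum_captureReward_lastVisit hdisj]
    exact (sum_lastVisitAssignment T Jset r d sched).symm
  · rintro ⟨σ, hσ, rfl⟩
    exact ⟨σ, (reward_eq_sum_captureReward_of_injOn hdisj T r d hσ).symm⟩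

/-- The 1-DFLP-CCD with loyal customers reduces to a maximum-weight assignment problem:
the optimal total reward over all schedules equals the maximum over partial injective
assignments `σ` of distinct locations to periods of `∑_{t : σ(t) ≠ ∅} ρ(σ(t), t)`,
where `ρ(i,t) = r_i ∑_{j ∈ J(i)} ∑_{s ≤ t} d^s_j`. -/
theorem stmt_5 {I C : Type*} [Fintype I] [DecidableEq C] (T : ℕ)
    (Jset : I → Finset C)
    (hdisj : ∀ i k : I, i ≠ k → Disjoint (Jset i) (Jset k))
    (r : I → ℝ) (hr : ∀ i, 0 ≤ r i) (d : ℕ → C → ℝ) (hd : ∀ s j, 0 ≤ d s j) :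
    sSup {x : ℝ | ∃ sched : ℕ → Option I, x = reward T Jset r d sched} =
    sSup {x : ℝ | ∃ σ : ℕ → Option I,
      (∀ t ∈ Finset.Icc 1 T, ∀ t' ∈ Finset.Icc 1 T, ∀ i : I,
        σ t = some i → σ t' = some i → t = t') ∧
      x = ∑ t ∈ Finset.Icc 1 T, ((σ t).elim 0 (fun i =>
        r i * ∑ j ∈ Jset i, ∑ s ∈ Finset.Icc 1 t, d s j))} :=
  stmt_5_general T Jset hdisj r d
end

section
/- In the backward greedy construction for the single-facility problem with identical rewards, the loss relative to any schedule is bounded by the greedy schedule's own value: π(y*) − π(y^B) ≤ π(y^B), hence the backward greedy heuristic is a 2-approximation. -/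
/-- Whether customer `j` is captured at some later period `s` with `t < s ≤ T`. -/
def capLaterB {I C : Type*} [DecidableEq C] (T : ℕ) (Jset : I → Finset C)
    (sched : ℕ → Option I) (j : C) (t : ℕ) : Bool :=
  decide (∃ s ∈ Finset.Ioc t T, capB Jset sched j s = true)

/-- Value of a single-facility schedule with identical rewards `R`: each customer's
accumulated demand `∑_{s ≤ t} d^s_j` is counted at its last capture period `t`. -/
def valLast {I C : Type*} [DecidableEq C] (T : ℕ) (Jset : I → Finset C)
    (R : ℝ) (d : ℕ → C → ℝ) (sched : ℕ → Option I) : ℝ :=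
  R * ∑ t ∈ Finset.Icc 1 T, ((sched t).elim 0 (fun i =>
    ∑ j ∈ (Jset i).filter (fun j => capLaterB T Jset sched j t = false),
      ∑ s ∈ Finset.Icc 1 t, d s j))

/-- Backward-greedy marginal value of opening location `i` at period `t`, given the
choices of the schedule at the later periods `t+1, …, T`. -/
def marg {I C : Type*} [DecidableEq C] (T : ℕ) (Jset : I → Finset C)
    (d : ℕ → C → ℝ) (sched : ℕ → Option I) (t : ℕ) (i : I) : ℝ :=
  ∑ j ∈ (Jset i).filter (fun j => capLaterB T Jset sched j t = false),
    ∑ s ∈ Finset.Icc 1 t, d s j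

section Aux

variable {I C : Type*} [DecidableEq C]

lemma capLaterB_true_iff (T : ℕ) (Jset : I → Finset C) (sched : ℕ → Option I)
    (j : C) (t : ℕ) :
    capLaterB T Jset sched j t = true ↔
      ∃ s, t < s ∧ s ≤ T ∧ capB Jset sched j s = true := by
  simp [capLaterB, Finset.mem_Ioc, and_assoc]

lemma capB_true_iff (Jset : I → Finset C) (sched : ℕ → Option I) (j : C) (s : ℕ) :
    capB Jset sched j s = true ↔ ∃ i, sched s = some i ∧ j ∈ Jset i := by
  unfold capB
  cases h : sched s <;> simp

/-- Customers counted at period `t` in `sched` whose value we charge to `B`'s later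
captures. -/
def AsetX (T : ℕ) (Jset : I → Finset C) (sched B : ℕ → Option I) (t : ℕ) : Finset C :=
  match sched t with
  | none => ∅
  | some i => (Jset i).filter fun j =>
      capLaterB T Jset sched j t = false ∧ capLaterB T Jset B j t = true

/-- Customers counted at period `t` in the greedy schedule `B`. -/
def GsetX (T : ℕ) (Jset : I → Finset C) (B : ℕ → Option I) (t : ℕ) : Finset C :=
  match B t with
  | none => ∅
  | some i => (Jset i).filter fun j => capLaterB T Jset B j t = false

lemma mem_AsetX_iff (T : ℕ) (Jset : I → Finset C) (sched B : ℕ → Option I)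
    (t : ℕ) (j : C) :
    j ∈ AsetX T Jset sched B t ↔
      capB Jset sched j t = true ∧ capLaterB T Jset sched j t = false ∧
        capLaterB T Jset B j t = true := by
  unfold AsetX
  cases h : sched t <;> simp [capB_true_iff, h, and_assoc]

lemma mem_GsetX_iff (T : ℕ) (Jset : I → Finset C) (B : ℕ → Option I)
    (t : ℕ) (j : C) :
    j ∈ GsetX T Jset B t ↔
      capB Jset B j t = true ∧ capLaterB T Jset B j t = false := by
  unfold GsetX
  cases h : B t <;> simp [capB_true_iff, h]

end Aux

/-- The backward greedy heuristic is a 2-approximation for the single-facility problem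
with identical rewards: if `B` is a schedule whose choice at every period maximizes the
backward-greedy marginal value, then every schedule's value is at most twice the value
of `B` (equivalently, `π(y*) − π(y^B) ≤ π(y^B)`). -/
theorem stmt_6 {I C : Type*} [DecidableEq C] (T : ℕ) (Jset : I → Finset C)
    (R : ℝ) (hR : 0 < R) (d : ℕ → C → ℝ) (hd : ∀ s j, 0 ≤ d s j)
    (B : ℕ → Option I)
    (hgreedy : ∀ t ∈ Finset.Icc 1 T, ∃ i, B t = some i ∧
      ∀ i' : I, marg T Jset d B t i' ≤ marg T Jset d B t i) :
    ∀ sched : ℕ → Option I,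
      valLast T Jset R d sched ≤ 2 * valLast T Jset R d B := by
  intro sched
  classical
  choose iB hiB hmax using hgreedy
  -- accumulated demand
  set D : ℕ → C → ℝ := fun t j => ∑ s ∈ Finset.Icc 1 t, d s j with hDdef
  have hDnn : ∀ t j, 0 ≤ D t j := fun t j => Finset.sum_nonneg fun s _ => hd s j
  have hDmono : ∀ {t u : ℕ}, t ≤ u → ∀ j, D t j ≤ D u j := by
    intro t u htu j
    exact Finset.sum_le_sum_of_subset_of_nonneg
      (Finset.Icc_subset_Icc_right htu) (fun s _ _ => hd s j)
  -- greedy value at each period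
  set Gval : ℕ → ℝ := fun t => ∑ j ∈ GsetX T Jset B t, D t j with hGvaldef
  have hGvalnn : ∀ t, 0 ≤ Gval t := fun t => Finset.sum_nonneg fun j _ => hDnn t j
  have hGval : ∀ t (ht : t ∈ Finset.Icc 1 T),
      marg T Jset d B t (iB t ht) = Gval t := by
    intro t ht
    simp only [hGvaldef]
    unfold GsetX marg
    rw [hiB t ht]
  -- last capture time of `j` under `B`
  set u : C → ℕ := fun j => sSup {s | s ≤ T ∧ capB Jset B j s = true} with hudef
  have hu : ∀ (t : ℕ) (j : C), capLaterB T Jset B j t = true →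
      t < u j ∧ u j ≤ T ∧ capB Jset B j (u j) = true ∧
        capLaterB T Jset B j (u j) = false := by
    intro t j hj
    obtain ⟨s, hts, hsT, hcap⟩ := (capLaterB_true_iff T Jset B j t).1 hj
    have hbdd : BddAbove {s | s ≤ T ∧ capB Jset B j s = true} :=
      ⟨T, fun x hx => hx.1⟩
    have hne : {s | s ≤ T ∧ capB Jset B j s = true}.Nonempty := ⟨s, hsT, hcap⟩
    have humem : u j ∈ {s | s ≤ T ∧ capB Jset B j s = true} :=
      Nat.sSup_mem hne hbdd
    have hsu : s ≤ u j := le_csSup hbdd ⟨hsT, hcap⟩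
    refine ⟨lt_of_lt_of_le hts hsu, humem.1, humem.2, ?_⟩
    by_contra hlat
    rw [Bool.not_eq_false, capLaterB_true_iff] at hlat
    obtain ⟨s', hus', hs'T, hcap'⟩ := hlat
    exact absurd (le_csSup hbdd (Set.mem_setOf.2 ⟨hs'T, hcap'⟩)) (not_le.2 hus')
  -- reduce to the sums
  suffices h : (∑ t ∈ Finset.Icc 1 T, ((sched t).elim 0 (fun i =>
        ∑ j ∈ (Jset i).filter (fun j => capLaterB T Jset sched j t = false),
          ∑ s ∈ Finset.Icc 1 t, d s j))) ≤
      2 * ∑ t ∈ Finset.Icc 1 T, ((B t).elim 0 (fun i =>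
        ∑ j ∈ (Jset i).filter (fun j => capLaterB T Jset B j t = false),
          ∑ s ∈ Finset.Icc 1 t, d s j)) by
    unfold valLast
    calc R * _ ≤ R * (2 * ∑ t ∈ Finset.Icc 1 T, ((B t).elim 0 (fun i =>
          ∑ j ∈ (Jset i).filter (fun j => capLaterB T Jset B j t = false),
            ∑ s ∈ Finset.Icc 1 t, d s j))) := mul_le_mul_of_nonneg_left h hR.le
      _ = 2 * (R * _) := by ring
  -- the greedy term at `t` equals `Gval t`
  have hGterm : ∀ t ∈ Finset.Icc 1 T, ((B t).elim 0 (fun i =>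
      ∑ j ∈ (Jset i).filter (fun j => capLaterB T Jset B j t = false),
        ∑ s ∈ Finset.Icc 1 t, d s j)) = Gval t := by
    intro t ht
    simp only [hGvaldef]
    unfold GsetX
    rw [hiB t ht]
    rfl
  -- step 1 : pointwise bound on the value of `sched` at `t`
  have step1 : ∀ t ∈ Finset.Icc 1 T, ((sched t).elim 0 (fun i =>
      ∑ j ∈ (Jset i).filter (fun j => capLaterB T Jset sched j t = false),
        ∑ s ∈ Finset.Icc 1 t, d s j)) ≤
      Gval t + ∑ j ∈ AsetX T Jset sched B t, D t j := by
    intro t ht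
    cases hs : sched t with
    | none =>
      have hA0 : (0:ℝ) ≤ ∑ j ∈ AsetX T Jset sched B t, D t j :=
        Finset.sum_nonneg fun j _ => hDnn t j
      simpa using add_nonneg (hGvalnn t) hA0
    | some i =>
      set S : Finset C :=
        (Jset i).filter (fun j => capLaterB T Jset sched j t = false) with hSdef
      have hA : AsetX T Jset sched B t =
          S.filter (fun j => capLaterB T Jset B j t = true) := by
        unfold AsetX
        rw [hs, hSdef, Finset.filter_filter]
      have hsplit : (∑ j ∈ S, D t j) =
          (∑ j ∈ S.filter (fun j => capLaterB T Jset B j t = true), D t j) +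
          ∑ j ∈ S.filter (fun j => ¬ capLaterB T Jset B j t = true), D t j :=
        (Finset.sum_filter_add_sum_filter_not S _ _).symm
      have h1 : (∑ j ∈ S.filter (fun j => ¬ capLaterB T Jset B j t = true), D t j)
          ≤ Gval t := by
        calc (∑ j ∈ S.filter (fun j => ¬ capLaterB T Jset B j t = true), D t j)
            ≤ ∑ j ∈ (Jset i).filter (fun j => capLaterB T Jset B j t = false),
                D t j := by
              apply Finset.sum_le_sum_of_subset_of_nonneg
              · intro j hj
                simp only [hSdef, Finset.mem_filter, Bool.not_eq_true] at hj ⊢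
                exact ⟨hj.1.1, hj.2⟩
              · intro j _ _; exact hDnn t j
          _ = marg T Jset d B t i := rfl
          _ ≤ marg T Jset d B t (iB t ht) := hmax t ht i
          _ = Gval t := hGval t ht
      have h2 : (∑ j ∈ S.filter (fun j => capLaterB T Jset B j t = true), D t j)
          = ∑ j ∈ AsetX T Jset sched B t, D t j := by rw [hA]
      show (∑ j ∈ S, D t j) ≤ Gval t + ∑ j ∈ AsetX T Jset sched B t, D t j
      rw [hsplit, h2]
      linarith [h1]
  -- step 2 : the charged sums are dominated by the greedy sums
  have step2 : (∑ t ∈ Finset.Icc 1 T, ∑ j ∈ AsetX T Jset sched B t, D t j) ≤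
      ∑ t ∈ Finset.Icc 1 T, Gval t := by
    simp only [hGvaldef]
    rw [← Finset.sum_sigma (Finset.Icc 1 T) (fun t => AsetX T Jset sched B t)
      (fun x => D x.1 x.2),
      ← Finset.sum_sigma (Finset.Icc 1 T) (fun t => GsetX T Jset B t)
      (fun x => D x.1 x.2)]
    set Src := (Finset.Icc 1 T).sigma (fun t => AsetX T Jset sched B t) with hSrc
    set Tgt := (Finset.Icc 1 T).sigma (fun t => GsetX T Jset B t) with hTgt
    have hmemSrc : ∀ x : Σ _ : ℕ, C, x ∈ Src →
        x.1 ∈ Finset.Icc 1 T ∧ capB Jset sched x.2 x.1 = true ∧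
          capLaterB T Jset sched x.2 x.1 = false ∧
          capLaterB T Jset B x.2 x.1 = true := by
      intro x hx
      rw [hSrc, Finset.mem_sigma] at hx
      exact ⟨hx.1, (mem_AsetX_iff T Jset sched B x.1 x.2).1 hx.2⟩
    calc ∑ x ∈ Src, D x.1 x.2
        ≤ ∑ x ∈ Src, D (u x.2) x.2 := by
          apply Finset.sum_le_sum
          intro x hx
          obtain ⟨hx1, _, _, hlat⟩ := hmemSrc x hx
          exact hDmono (hu x.1 x.2 hlat).1.le x.2
      _ = ∑ y ∈ Src.image (fun x : Σ _ : ℕ, C => (⟨u x.2, x.2⟩ : Σ _ : ℕ, C)),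
            D y.1 y.2 := by
          rw [Finset.sum_image]
          rintro ⟨a, b⟩ hx ⟨a', b'⟩ hx' hxx'
          have hb : b = b' := congrArg Sigma.snd hxx'
          subst hb
          obtain ⟨hx1, hcapx, hlatx, _⟩ := hmemSrc _ hx
          obtain ⟨hx1', hcapx', hlatx', _⟩ := hmemSrc _ hx'
          simp only at hx1 hcapx hlatx hx1' hcapx' hlatx'
          have h12 : a = a' := by
            rcases lt_trichotomy a a' with hlt | heq | hgt
            · exfalso
              have : capLaterB T Jset sched b a = true :=
                (capLaterB_true_iff T Jset sched b a).2
                  ⟨a', hlt, (Finset.mem_Icc.1 hx1').2, hcapx'⟩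
              rw [this] at hlatx; exact absurd hlatx (by simp)
            · exact heq
            · exfalso
              have : capLaterB T Jset sched b a' = true :=
                (capLaterB_true_iff T Jset sched b a').2
                  ⟨a, hgt, (Finset.mem_Icc.1 hx1).2, hcapx⟩
              rw [this] at hlatx'; exact absurd hlatx' (by simp)
          subst h12
          rfl
      _ ≤ ∑ y ∈ Tgt, D y.1 y.2 := by
          apply Finset.sum_le_sum_of_subset_of_nonneg
          · intro y hy
            simp only [Finset.mem_image] at hy
            obtain ⟨x, hx, hxy⟩ := hy
            obtain ⟨hx1, _, _, hlat⟩ := hmemSrc x hx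
            obtain ⟨hlt, hle, hcap, hnolat⟩ := hu x.1 x.2 hlat
            subst hxy
            rw [hTgt, Finset.mem_sigma]
            constructor
            · rw [Finset.mem_Icc]
              exact ⟨le_trans (Finset.mem_Icc.1 hx1).1 hlt.le, hle⟩
            · exact (mem_GsetX_iff T Jset B (u x.2) x.2).2 ⟨hcap, hnolat⟩
          · intro y _ _; exact hDnn y.1 y.2
  -- combine
  calc (∑ t ∈ Finset.Icc 1 T, ((sched t).elim 0 (fun i =>
        ∑ j ∈ (Jset i).filter (fun j => capLaterB T Jset sched j t = false),
          ∑ s ∈ Finset.Icc 1 t, d s j)))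
      ≤ ∑ t ∈ Finset.Icc 1 T,
          (Gval t + ∑ j ∈ AsetX T Jset sched B t, D t j) :=
        Finset.sum_le_sum step1
    _ = (∑ t ∈ Finset.Icc 1 T, Gval t) +
          ∑ t ∈ Finset.Icc 1 T, ∑ j ∈ AsetX T Jset sched B t, D t j :=
        Finset.sum_add_distrib
    _ ≤ (∑ t ∈ Finset.Icc 1 T, Gval t) + ∑ t ∈ Finset.Icc 1 T, Gval t := by
        gcongr
    _ = 2 * ∑ t ∈ Finset.Icc 1 T, ((B t).elim 0 (fun i =>
          ∑ j ∈ (Jset i).filter (fun j => capLaterB T Jset B j t = false),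
            ∑ s ∈ Finset.Icc 1 t, d s j)) := by
        rw [two_mul, Finset.sum_congr rfl hGterm]
end

section
/- In the 3SAT reduction, the total reward of any single-facility schedule is at most R(n+m), with equality if and only if every variable-customer and every clause-customer is captured at least once during the n periods. -/
/-- Total reward of the 3SAT-reduction instance: `R` times the number of captured
variable-customers plus the number of captured clause-customers.  A location is a pair
`(x, b)` (variable `x` assigned literal `b`); it captures variable-customer `x` and the
clause-customers of all clauses containing the literal `(x, b)`.  All demands are one
unit at period 1, and each customer's unit is counted at most once. -/
noncomputable def total3sat (n m : ℕ) (cl : Fin m → Finset (Fin n × Bool)) (R : ℝ)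
    (σ : ℕ → Option (Fin n × Bool)) : ℝ :=
  R * ((((Finset.univ : Finset (Fin n)).filter
        (fun x => ∃ t ∈ Finset.range n, ∃ b : Bool, σ t = some (x, b))).card : ℝ) +
      (((Finset.univ : Finset (Fin m)).filter
        (fun c => ∃ t ∈ Finset.range n, ∃ l, σ t = some l ∧ l ∈ cl c)).card : ℝ))

/-- In the 3SAT reduction (n variables, m clauses with exactly three literals each,
identical reward `R > 0`, n periods, one open location per period), the total reward of
any schedule is at most `R(n+m)`, with equality iff every variable-customer and every
clause-customer is captured at least once during the `n` periods. -/
theorem stmt_9 (n m : ℕ) (cl : Fin m → Finset (Fin n × Bool))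
    (hcl : ∀ c, (cl c).card = 3) (R : ℝ) (hR : 0 < R)
    (σ : ℕ → Option (Fin n × Bool)) :
    total3sat n m cl R σ ≤ R * ((n : ℝ) + (m : ℝ)) ∧
    (total3sat n m cl R σ = R * ((n : ℝ) + (m : ℝ)) ↔
      (∀ x : Fin n, ∃ t ∈ Finset.range n, ∃ b : Bool, σ t = some (x, b)) ∧
      (∀ c : Fin m, ∃ t ∈ Finset.range n, ∃ l, σ t = some l ∧ l ∈ cl c)) := by
  classical
  set A := (Finset.univ : Finset (Fin n)).filter
      (fun x => ∃ t ∈ Finset.range n, ∃ b : Bool, σ t = some (x, b)) with hA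
  set B := (Finset.univ : Finset (Fin m)).filter
      (fun c => ∃ t ∈ Finset.range n, ∃ l, σ t = some l ∧ l ∈ cl c) with hB
  have hAn : A.card ≤ n := (Finset.card_filter_le _ _).trans (by simp)
  have hBm : B.card ≤ m := (Finset.card_filter_le _ _).trans (by simp)
  have key : (A.card : ℝ) + B.card ≤ (n : ℝ) + m := by
    exact_mod_cast add_le_add hAn hBm
  refine ⟨mul_le_mul_of_nonneg_left key hR.le, ?_⟩
  have hiff : total3sat n m cl R σ = R * ((n : ℝ) + (m : ℝ)) ↔
      (A.card : ℝ) + B.card = (n : ℝ) + m := by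
    unfold total3sat
    rw [← hA, ← hB]
    exact ⟨fun h => mul_left_cancel₀ hR.ne' h, fun h => by rw [h]⟩
  rw [hiff]
  constructor
  · intro h
    have hnat : A.card + B.card = n + m := by exact_mod_cast h
    have hAe : A = Finset.univ := Finset.eq_univ_of_card _ (by simp; omega)
    have hBe : B = Finset.univ := Finset.eq_univ_of_card _ (by simp; omega)
    constructor
    · intro x
      have hx : x ∈ A := hAe ▸ Finset.mem_univ x
      rw [hA, Finset.mem_filter] at hx
      exact hx.2
    · intro c
      have hc : c ∈ B := hBe ▸ Finset.mem_univ c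
      rw [hB, Finset.mem_filter] at hc
      exact hc.2
  · rintro ⟨h1, h2⟩
    have hAe : A = Finset.univ := Finset.eq_univ_iff_forall.mpr fun x =>
      (Finset.mem_filter).mpr ⟨Finset.mem_univ x, h1 x⟩
    have hBe : B = Finset.univ := Finset.eq_univ_iff_forall.mpr fun c =>
      (Finset.mem_filter).mpr ⟨Finset.mem_univ c, h2 c⟩
    rw [hAe, hBe]
    simp
end

section
/- There is a satisfying assignment for the 3SAT instance if and only if the constructed 1-DFLP-CCD instance admits a schedule of total reward at least R(n+m). -/
/-- The 3SAT instance (clauses `cl` with exactly three literals each) has a satisfying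
assignment iff the constructed 1-DFLP-CCD instance admits a schedule of total reward at
least `R(n+m)`. -/
theorem stmt_10 (n m : ℕ) (cl : Fin m → Finset (Fin n × Bool))
    (hcl : ∀ c, (cl c).card = 3) (R : ℝ) (hR : 0 < R) :
    (∃ a : Fin n → Bool, ∀ c : Fin m, ∃ l ∈ cl c, a l.1 = l.2) ↔
    (∃ σ : ℕ → Option (Fin n × Bool),
      R * ((n : ℝ) + (m : ℝ)) ≤ total3sat n m cl R σ) := by
  constructor
  · rintro ⟨a, ha⟩
    refine ⟨fun t => if h : t < n then some (⟨t, h⟩, a ⟨t, h⟩) else none, ?_⟩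
    unfold total3sat
    have h1 : ((Finset.univ : Finset (Fin n)).filter
        (fun x => ∃ t ∈ Finset.range n, ∃ b : Bool,
          (if h : t < n then some ((⟨t, h⟩ : Fin n), a ⟨t, h⟩) else none) = some (x, b)))
        = Finset.univ := by
      apply Finset.eq_univ_of_forall
      intro x
      simp only [Finset.mem_filter, Finset.mem_univ, true_and, Finset.mem_range]
      exact ⟨x.1, x.2, a x, by simp [x.2]⟩
    have h2 : ((Finset.univ : Finset (Fin m)).filter
        (fun c => ∃ t ∈ Finset.range n, ∃ l,
          (if h : t < n then some ((⟨t, h⟩ : Fin n), a ⟨t, h⟩) else none) = some l ∧ l ∈ cl c))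
        = Finset.univ := by
      apply Finset.eq_univ_of_forall
      intro c
      simp only [Finset.mem_filter, Finset.mem_univ, true_and, Finset.mem_range]
      obtain ⟨l, hl, hal⟩ := ha c
      refine ⟨l.1, l.1.2, (l.1, a l.1), by simp [l.1.2], ?_⟩
      rwa [hal, Prod.mk.eta]
    rw [h1, h2]
    simp
  · rintro ⟨σ, hσ⟩
    unfold total3sat at hσ
    set A := (Finset.univ : Finset (Fin n)).filter
        (fun x => ∃ t ∈ Finset.range n, ∃ b : Bool, σ t = some (x, b)) with hA
    set B := (Finset.univ : Finset (Fin m)).filter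
        (fun c => ∃ t ∈ Finset.range n, ∃ l, σ t = some l ∧ l ∈ cl c) with hB
    have hAle : A.card ≤ n := by
      simpa using Finset.card_le_card (Finset.filter_subset _ (Finset.univ : Finset (Fin n)))
    have hBle : B.card ≤ m := by
      simpa using Finset.card_le_card (Finset.filter_subset _ (Finset.univ : Finset (Fin m)))
    have hsum : (n : ℝ) + m ≤ (A.card : ℝ) + B.card := le_of_mul_le_mul_left hσ hR
    have hAeq : A.card = n := by
      have : (n : ℝ) ≤ (A.card : ℝ) := by
        have : (B.card : ℝ) ≤ m := by exact_mod_cast hBle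
        linarith
      exact le_antisymm hAle (by exact_mod_cast this)
    have hBeq : B.card = m := by
      have : (m : ℝ) ≤ (B.card : ℝ) := by
        have : (A.card : ℝ) ≤ n := by exact_mod_cast hAle
        linarith
      exact le_antisymm hBle (by exact_mod_cast this)
    have hAuniv : ∀ x : Fin n, ∃ t ∈ Finset.range n, ∃ b : Bool, σ t = some (x, b) := by
      intro x
      have := Finset.filter_card_eq (by simpa using hAeq) x (Finset.mem_univ x)
      simpa using this
    have hBuniv : ∀ c : Fin m, ∃ t ∈ Finset.range n, ∃ l, σ t = some l ∧ l ∈ cl c := by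
      intro c
      have := Finset.filter_card_eq (by simpa using hBeq) c (Finset.mem_univ c)
      simpa using this
    -- pick, for each variable x, a period f x and bit a x
    have hAuniv' : ∀ x : Fin n, ∃ t, t < n ∧ ∃ b, σ t = some (x, b) := by
      intro x
      obtain ⟨t, ht, b, hb⟩ := hAuniv x
      exact ⟨t, Finset.mem_range.mp ht, b, hb⟩
    choose f hf av hav using hAuniv'
    have hfinj : Function.Injective (fun x : Fin n => (⟨f x, hf x⟩ : Fin n)) := by
      intro x y hxy
      have : σ (f x) = σ (f y) := by simpa using congrArg (fun t : Fin n => σ t.1) hxy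
      rw [hav x, hav y] at this
      exact congrArg Prod.fst (Option.some_injective _ this)
    have hfsurj : Function.Surjective (fun x : Fin n => (⟨f x, hf x⟩ : Fin n)) :=
      Finite.surjective_of_injective hfinj
    refine ⟨av, fun c => ?_⟩
    obtain ⟨t, ht, l, hσt, hlc⟩ := hBuniv c
    obtain ⟨x, hx⟩ := hfsurj ⟨t, Finset.mem_range.mp ht⟩
    have hfx : f x = t := congrArg Fin.val hx
    have : some (x, av x) = some l := by rw [← hav x, hfx, hσt]
    have hl : l = (x, av x) := (Option.some_injective _ this).symm
    exact ⟨l, hlc, by rw [hl]⟩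
end

section
/- In the analytical dual procedure for the single-facility subproblem, the dual value θ at the last capture period of the customer equals zero, and the resulting dual objective equals the primal optimal value ∑ G^{ℓt} x^{ℓt}. -/
/-!
By the recursion for `θ`, for every capture period `t` with previous capture period `p` and
every `ℓ < t`, `ℓ ≠ p`, we have `G^{ℓt} − G^{pt} + θ^p ≤ θ^ℓ`; so the maximum defining `λ^t` is
attained at `ℓ = p`, and `λ^t = G^{pt} − θ^p + θ^t`. Summing along the capture path, the `θ`
terms telescope to `θ^{last} − θ^0`. Finally no capture arc starts beyond the last capture
period, so `θ^{last}` is the terminal value `max_i G^{last,T+1}_i = 0`.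
-/

/-- `Dsum d ℓ t = ∑_{ℓ < s ≤ t} d^s`, the demand accumulated between periods `ℓ` and `t`. -/
noncomputable def Dsum (d : ℕ → ℝ) (ℓ t : ℕ) : ℝ := ∑ s ∈ Finset.Icc (ℓ + 1) t, d s

/-- Previous capture period: the largest element of `P` below `t`, or `0`. -/
def prevP (P : Finset ℕ) (t : ℕ) : ℕ := (P.filter (fun s => s < t)).sup id

/-- `λ^t_i = max_{ℓ ∈ 𝒯^S, ℓ < t} { G^{ℓt}_i − θ^ℓ + θ^t }` (value `0` if `t = 0`). -/
noncomputable def lamG (G : ℕ → ℕ → ℝ) (θ : ℕ → ℝ) (t : ℕ) : ℝ :=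
  WithBot.unbotD 0 (((Finset.range t).image (fun ℓ => G ℓ t - θ ℓ + θ t)).max)

open Finset

lemma prevP_lt {P : Finset ℕ} {t : ℕ} (ht : 0 < t) : prevP P t < t :=
  (Finset.sup_lt_iff ht).2 fun _ hs => (mem_filter.1 hs).2

lemma prevP_eq_sup {P : Finset ℕ} {t : ℕ} (h : ∀ s ∈ P, s < t) : prevP P t = P.sup id := by
  rw [prevP, filter_true_of_mem h]

lemma prevP_insert_of_le {P : Finset ℕ} {a t : ℕ} (h : t ≤ a) :
    prevP (insert a P) t = prevP P t := by
  rw [prevP, prevP, filter_insert, if_neg h.not_gt]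

lemma sum_sub_prevP {M : Type*} [AddCommGroup M] (f : ℕ → M) (P : Finset ℕ) :
    ∑ t ∈ P, (f t - f (prevP P t)) = f (P.sup id) - f 0 := by
  induction P using Finset.induction_on_max with
  | empty => simp
  | insert a P hlt ih =>
    have hsup : P.sup id ≤ a := Finset.sup_le fun s hs => (hlt s hs).le
    rw [sum_insert fun ha => (hlt a ha).false, prevP_insert_of_le le_rfl, prevP_eq_sup hlt,
      sum_congr rfl fun t ht => by rw [prevP_insert_of_le (hlt t ht).le], ih, sup_insert,
      id, sup_of_le_left hsup]
    abel

lemma lamG_eq_of_forall_le {g : ℕ → ℕ → ℝ} {θ : ℕ → ℝ} {p t : ℕ} (hpt : p < t)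
    (hle : ∀ ℓ < t, g ℓ t - θ ℓ ≤ g p t - θ p) : lamG g θ t = g p t - θ p + θ t := by
  have hmem : g p t - θ p + θ t ∈ (range t).image (fun ℓ => g ℓ t - θ ℓ + θ t) :=
    mem_image_of_mem _ (mem_range.2 hpt)
  have hmax : ((range t).image (fun ℓ => g ℓ t - θ ℓ + θ t)).max' ⟨_, hmem⟩ =
      g p t - θ p + θ t := by
    refine le_antisymm (max'_le _ _ _ ?_) (le_max' _ _ hmem)
    simp only [mem_image, mem_range]
    rintro _ ⟨ℓ, hℓt, rfl⟩
    linarith [hle ℓ hℓt]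
  rw [lamG, ← coe_max' ⟨_, hmem⟩, WithBot.unbotD_coe, hmax]

/-- The fixed-point equations by which the analytical dual procedure computes `θ`. -/
def DualRecursion {I : Type*} [Fintype I] [Nonempty I] (T : ℕ) (P : Finset ℕ) (loc : ℕ → I)
    (G : ℕ → ℕ → I → ℝ) (θ : ℕ → ℝ) : Prop :=
  ∀ ℓ, ℓ ≤ T → θ ℓ =
    (insert (Finset.univ.sup' Finset.univ_nonempty (fun i => G ℓ (T + 1) i))
      ((P.filter (fun t => ℓ < t ∧ prevP P t ≠ ℓ)).image
        (fun t => G ℓ t (loc t) - G (prevP P t) t (loc t) + θ (prevP P t)))).max'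
      (Finset.insert_nonempty _ _)

namespace DualRecursion

variable {I : Type*} [Fintype I] [Nonempty I] {T : ℕ} {P : Finset ℕ} {loc : ℕ → I}
  {G : ℕ → ℕ → I → ℝ} {θ : ℕ → ℝ}

lemma le_of_mem (hθ : DualRecursion T P loc G θ) {ℓ t : ℕ} (hℓ : ℓ ≤ T) (ht : t ∈ P)
    (hℓt : ℓ < t) (hprev : prevP P t ≠ ℓ) :
    G ℓ t (loc t) - G (prevP P t) t (loc t) + θ (prevP P t) ≤ θ ℓ := by
  have hjump : t ∈ P.filter (fun t => ℓ < t ∧ prevP P t ≠ ℓ) := mem_filter.2 ⟨ht, hℓt, hprev⟩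
  rw [hθ ℓ hℓ]
  exact le_max' _ _ (mem_insert_of_mem (mem_image_of_mem
    (fun t => G ℓ t (loc t) - G (prevP P t) t (loc t) + θ (prevP P t)) hjump))

lemma eq_zero_of_forall_le (hθ : DualRecursion T P loc G θ) (hGterm : ∀ ℓ i, G ℓ (T + 1) i = 0)
    {ℓ : ℕ} (hℓ : ℓ ≤ T) (hP : ∀ t ∈ P, t ≤ ℓ) : θ ℓ = 0 := by
  have hempty : P.filter (fun t => ℓ < t ∧ prevP P t ≠ ℓ) = ∅ :=
    filter_eq_empty_iff.2 fun t ht h => (hP t ht).not_gt h.1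
  simp only [hθ ℓ hℓ, hempty, image_empty, hGterm, sup'_const]
  exact max'_singleton 0

lemma lamG_eq (hθ : DualRecursion T P loc G θ) (hP : P ⊆ Icc 1 T) {t : ℕ} (ht : t ∈ P) :
    lamG (fun ℓ t => G ℓ t (loc t)) θ t =
      G (prevP P t) t (loc t) - θ (prevP P t) + θ t := by
  obtain ⟨ht1, htT⟩ := mem_Icc.1 (hP ht)
  refine lamG_eq_of_forall_le (prevP_lt ht1) fun ℓ hℓt => ?_
  by_cases hprev : prevP P t = ℓ
  · rw [hprev]
  · linarith [hθ.le_of_mem (by omega) ht hℓt hprev]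

end DualRecursion

theorem stmt_16_general {I : Type*} [Fintype I] [Nonempty I]
    (T : ℕ)
    (P : Finset ℕ) (hP : P ⊆ Finset.Icc 1 T) (hPne : P.Nonempty)
    (loc : ℕ → I)
    (G : ℕ → ℕ → I → ℝ)
    (hGterm : ∀ ℓ i, G ℓ (T + 1) i = 0)
    (θ : ℕ → ℝ)
    (hθ : ∀ ℓ, ℓ ≤ T → θ ℓ =
      (insert (Finset.univ.sup' Finset.univ_nonempty (fun i => G ℓ (T + 1) i))
        ((P.filter (fun t => ℓ < t ∧ prevP P t ≠ ℓ)).image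
          (fun t => G ℓ t (loc t) - G (prevP P t) t (loc t) + θ (prevP P t)))).max'
        (Finset.insert_nonempty _ _)) :
    θ (P.max' hPne) = 0 ∧
    (∑ t ∈ P, lamG (fun ℓ t => G ℓ t (loc t)) θ t) + θ 0 =
      ∑ t ∈ P, G (prevP P t) t (loc t) := by
  have hθ : DualRecursion T P loc G θ := hθ
  have hlast : θ (P.sup id) = 0 := by
    rw [← sup'_eq_sup hPne, ← max'_eq_sup']
    exact hθ.eq_zero_of_forall_le hGterm (mem_Icc.1 (hP (P.max'_mem hPne))).2 P.le_max'
  refine ⟨by rwa [max'_eq_sup', sup'_eq_sup], ?_⟩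
  calc (∑ t ∈ P, lamG (fun ℓ t => G ℓ t (loc t)) θ t) + θ 0
      = ∑ t ∈ P, G (prevP P t) t (loc t) + (∑ t ∈ P, (θ t - θ (prevP P t)) + θ 0) := by
        rw [sum_congr rfl fun t ht => hθ.lamG_eq hP ht, ← add_assoc, ← sum_add_distrib]
        congr 1
        exact sum_congr rfl fun t _ => by ring
    _ = ∑ t ∈ P, G (prevP P t) t (loc t) := by rw [sum_sub_prevP, hlast]; ring

/-- Analytical optimality-cut procedure for the single-facility subproblem of a fixed
customer: the capture periods form the set `P ⊆ {1,…,T}` (at period `t ∈ P` the open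
acceptable location is `loc t`), the primal transition variables are `x^{st}_i = 1`
exactly for consecutive capture periods, and `G^{ℓt}_i = r_i ∑_{ℓ<s≤t} d^s` for
`t ≤ T` while terminal arcs to `T+1` carry `G^{ℓ(T+1)}_i = 0`.  If `θ` satisfies the
fixed-point equations of Algorithm 2 (computed in decreasing order), then the dual
value at the last capture period is `0`, and the dual objective
`∑_{t ∈ P} λ^t_{loc t} + θ^0` equals the primal optimal value
`∑_{t ∈ P} G^{(prev t) t}_{loc t}` (strong duality via telescoping along the capture
path). -/
theorem stmt_16 {I : Type*} [Fintype I] [Nonempty I]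
    (r : I → ℝ) (hr : ∀ i, 0 ≤ r i) (T : ℕ) (hT : 0 < T)
    (d : ℕ → ℝ) (hd : ∀ s, 0 ≤ d s)
    (P : Finset ℕ) (hP : P ⊆ Finset.Icc 1 T) (hPne : P.Nonempty)
    (loc : ℕ → I)
    (G : ℕ → ℕ → I → ℝ)
    (hG : ∀ ℓ t i, t ≤ T → G ℓ t i = r i * Dsum d ℓ t)
    (hGterm : ∀ ℓ i, G ℓ (T + 1) i = 0)
    (θ : ℕ → ℝ)
    (hθ : ∀ ℓ, ℓ ≤ T → θ ℓ =
      (insert (Finset.univ.sup' Finset.univ_nonempty (fun i => G ℓ (T + 1) i))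
        ((P.filter (fun t => ℓ < t ∧ prevP P t ≠ ℓ)).image
          (fun t => G ℓ t (loc t) - G (prevP P t) t (loc t) + θ (prevP P t)))).max'
        (Finset.insert_nonempty _ _)) :
    θ (P.max' hPne) = 0 ∧
    (∑ t ∈ P, lamG (fun ℓ t => G ℓ t (loc t)) θ t) + θ 0 =
      ∑ t ∈ P, G (prevP P t) t (loc t) :=
  stmt_16_general T P hP hPne loc G hGterm θ hθ
end
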